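/- Let n be a positive integer, let x, y_1, …, y_n be vectors in H, let c_1, …, c_n be complex numbers, and let p > 1 and q satisfy 1/p + 1/q = 1. Then |∑_{i=1}^n c_i (x, y_i)|^2 ≤ ‖x‖^2 · (∑_{i=1}^n |c_i|^p (∑_{j=1}^n |(y_i, y_j)|))^{1/p} · (∑_{i=1}^n |c_i|^q (∑_{j=1}^n |(y_i, y_j)|))^{1/q}. -/

import Mathlib

/-!
Writing `v = ∑ cᵢ yᵢ`, the left side is `|(x, v)|²`, which Cauchy–Schwarz bounds by `‖x‖² ‖v‖²`.
Expanding `‖v‖²` and using the triangle inequality gives `‖v‖² ≤ ∑ᵢⱼ |cᵢ| |cⱼ| |(yᵢ, yⱼ)|`,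
and Hölder's inequality on index pairs, with the weight `|(yᵢ, yⱼ)|` shared between the two
factors, bounds this double sum by the product of the two weighted `ℓᵖ`/`ℓ^q` norms (Schur's test).
-/

open Finset RCLike ComplexConjugate

section InnerProduct

variable {𝕜 E ι : Type*} [RCLike 𝕜] [NormedAddCommGroup E] [InnerProductSpace 𝕜 E]

theorem sum_mul_inner_eq_inner_sum_smul (s : Finset ι) (x : E) (y : ι → E) (c : ι → 𝕜) :
    ∑ i ∈ s, c i * inner 𝕜 x (y i) = inner 𝕜 x (∑ i ∈ s, c i • y i) := by
  simp only [inner_sum, inner_smul_right]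

theorem norm_sum_smul_sq_le (s : Finset ι) (y : ι → E) (c : ι → 𝕜) :
    ‖∑ i ∈ s, c i • y i‖ ^ 2 ≤ ∑ i ∈ s, ∑ j ∈ s, ‖c i‖ * ‖c j‖ * ‖(inner 𝕜 (y i) (y j) : 𝕜)‖ := by
  set v := ∑ i ∈ s, c i • y i
  have hvv : inner 𝕜 v v = ∑ i ∈ s, ∑ j ∈ s, conj (c i) * c j * inner 𝕜 (y i) (y j) := by
    simp only [v, sum_inner, inner_smul_left]
    simp only [inner_sum, inner_smul_right, mul_sum, mul_assoc]
  calc ‖v‖ ^ 2 = re (inner 𝕜 v v) := norm_sq_eq_re_inner v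
    _ ≤ ‖(inner 𝕜 v v : 𝕜)‖ := re_le_norm _
    _ ≤ ∑ i ∈ s, ∑ j ∈ s, ‖conj (c i) * c j * inner 𝕜 (y i) (y j)‖ := by
      rw [hvv]
      exact (norm_sum_le _ _).trans (sum_le_sum fun i _ => norm_sum_le _ _)
    _ = _ := by simp only [norm_mul, norm_conj]

end InnerProduct

theorem sum_mul_mul_le_schur_test {ι : Type*} [Fintype ι] {p q : ℝ} (hpq : p.HolderConjugate q)
    {u v : ι → ℝ} {a : ι → ι → ℝ} (hu : 0 ≤ u) (hv : 0 ≤ v) (ha : ∀ i j, 0 ≤ a i j) :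
    ∑ i, ∑ j, u i * v j * a i j ≤
      (∑ i, u i ^ p * ∑ j, a i j) ^ (1 / p) * (∑ j, v j ^ q * ∑ i, a i j) ^ (1 / q) := by
  -- Hölder on `ι × ι`, after splitting the kernel as `a = a ^ (1/p) * a ^ (1/q)`.
  have split (w : ℝ) {r : ℝ} (hw : 0 ≤ w) (hr : r ≠ 0) (i j : ι) :
      (w * a i j ^ (1 / r)) ^ r = w ^ r * a i j := by
    rw [Real.mul_rpow hw (Real.rpow_nonneg (ha i j) _), ← Real.rpow_mul (ha i j),
      one_div_mul_cancel hr, Real.rpow_one]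
  have merge (i j : ι) : u i * a i j ^ (1 / p) * (v j * a i j ^ (1 / q)) = u i * v j * a i j := by
    rw [mul_mul_mul_comm, ← Real.rpow_add' (ha i j) (by rw [hpq.one_div_add_one_div]; norm_num),
      hpq.one_div_add_one_div, div_one, Real.rpow_one]
  have holder := Real.inner_le_Lp_mul_Lq_of_nonneg (univ : Finset (ι × ι)) hpq
    (f := fun ij => u ij.1 * a ij.1 ij.2 ^ (1 / p)) (g := fun ij => v ij.2 * a ij.1 ij.2 ^ (1 / q))
    (fun ij _ => mul_nonneg (hu _) (Real.rpow_nonneg (ha _ _) _))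
    (fun ij _ => mul_nonneg (hv _) (Real.rpow_nonneg (ha _ _) _))
  simp only [split _ (hu _) hpq.ne_zero, split _ (hv _) hpq.symm.ne_zero, merge,
    Fintype.sum_prod_type] at holder
  rw [sum_comm (f := fun i j => v j ^ q * a i j)] at holder
  simpa only [mul_sum] using holder

theorem stmt_11_general {H : Type*} [NormedAddCommGroup H] [InnerProductSpace ℂ H]
    {n : ℕ} (x : H) (y : Fin n → H) (c : Fin n → ℂ) (p q : ℝ) (hp : 1 < p) (hpq : 1 / p + 1 / q = 1) :
    (‖(∑ i, c i * (inner ℂ x (y i) : ℂ))‖) ^ 2 ≤ ‖x‖ ^ 2 * (∑ i, (‖(c i)‖) ^ p * (∑ j, ‖((inner ℂ (y i) (y j) : ℂ))‖)) ^ (1 / p) * (∑ i, (‖(c i)‖) ^ q * (∑ j, ‖((inner ℂ (y i) (y j) : ℂ))‖)) ^ (1 / q) := by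
  have hpq' : p.HolderConjugate q := Real.holderConjugate_iff.mpr ⟨hp, by simpa using hpq⟩
  have schur := sum_mul_mul_le_schur_test hpq' (u := fun i => ‖c i‖) (v := fun i => ‖c i‖)
    (a := fun i j => ‖(inner ℂ (y i) (y j) : ℂ)‖) (fun _ => norm_nonneg _) (fun _ => norm_nonneg _)
    (fun _ _ => norm_nonneg _)
  simp only [norm_inner_symm (y _) (y _)] at schur
  rw [sum_mul_inner_eq_inner_sum_smul, mul_assoc]
  calc _ ≤ (‖x‖ * ‖∑ i, c i • y i‖) ^ 2 := by gcongr; exact norm_inner_le_norm _ _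
    _ = ‖x‖ ^ 2 * ‖∑ i, c i • y i‖ ^ 2 := mul_pow _ _ _
    _ ≤ _ := by gcongr; exact (norm_sum_smul_sq_le _ _ _).trans schur

theorem stmt_11 {H : Type*} [NormedAddCommGroup H] [InnerProductSpace ℂ H]
    {n : ℕ} (hn : 0 < n) (x : H) (y : Fin n → H) (c : Fin n → ℂ) (p q : ℝ) (hp : 1 < p) (hpq : 1 / p + 1 / q = 1) :
    (‖(∑ i, c i * (inner ℂ x (y i) : ℂ))‖) ^ 2 ≤ ‖x‖ ^ 2 * (∑ i, (‖(c i)‖) ^ p * (∑ j, ‖((inner ℂ (y i) (y j) : ℂ))‖)) ^ (1 / p) * (∑ i, (‖(c i)‖) ^ q * (∑ j, ‖((inner ℂ (y i) (y j) : ℂ))‖)) ^ (1 / q) :=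
  stmt_11_general x y c p q hp hpq
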